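/- arXiv:math/9612225 — 2 statements merged into one kernel-verified Lean document; each statement's English description precedes it below -/
import Mathlib

section
/- Let a, b be complex numbers such that (a+b+1/2) + m ≠ 0 and (2a+2b) + m ≠ 0 for every natural number m. Then for every natural number k, ∑_{j=0}^{k} [(a)_j (b)_j / ((a+b+1/2)_j · j!)] · [(a)_{k−j} (b)_{k−j} / ((a+b+1/2)_{k−j} · (k−j)!)] = (2a)_k (2b)_k (a+b)_k / ((a+b+1/2)_k (2a+2b)_k · k!). (This is Clausen's formula ₂F₁(a,b; a+b+1/2; x)² = ₃F₂(2a, 2b, a+b; a+b+1/2, 2a+2b; x) stated at the level of power-series coefficients via the Cauchy product.) -/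
/-!
Let `c = a + b + 1/2` and let `S k` be the Cauchy square of the ₂F₁ coefficients. Zeilberger's
algorithm finds a certificate (`clausenCert`) that turns each summand of
`(c+k)(2a+2b+k)(k+1) S (k+1) - (2a+k)(2b+k)(a+b+k) S k` into a telescoping difference, so `S`
satisfies the first-order recurrence of the ₃F₂ coefficients. Both sequences start at `1`, and the
recurrence determines them because its leading factor never vanishes.
-/

/-- Rising factorial (Pochhammer symbol) `(z)_n` over the complex numbers. -/
noncomputable def poch (z : ℂ) (n : ℕ) : ℂ := (ascPochhammer ℂ n).eval z

open Finset

lemma poch_zero (z : ℂ) : poch z 0 = 1 := by simp [poch]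

lemma poch_succ (z : ℂ) (n : ℕ) : poch z (n + 1) = poch z n * (z + n) :=
  ascPochhammer_succ_eval n z

lemma poch_ne_zero {z : ℂ} (h : ∀ m : ℕ, z + m ≠ 0) (n : ℕ) : poch z n ≠ 0 := by
  induction n with
  | zero => simp [poch_zero]
  | succ n ih => rw [poch_succ]; exact mul_ne_zero ih (h n)

theorem seq_eq_of_recurrence {M₀ : Type*} [MonoidWithZero M₀] [IsLeftCancelMulZero M₀]
    {D N u v : ℕ → M₀}
    (hD : ∀ n, D n ≠ 0) (hu : ∀ n, D n * u (n + 1) = N n * u n)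
    (hv : ∀ n, D n * v (n + 1) = N n * v n) (h0 : u 0 = v 0) : u = v := by
  funext n
  induction n with
  | zero => exact h0
  | succ n ih => exact mul_left_cancel₀ (hD n) (by rw [hu, hv, ih])

section Clausen

variable {K : Type*} [Field K] [CharZero K] {a b : K} {f : ℕ → K}

def clausenCert (s : K) (k j : ℕ) : K := j * (s - 1 / 2 + j) * (2 * s + 3 * k + 2 - 2 * j)

theorem clausen_wz_step
    (hf : ∀ n : ℕ, (a + b + 1 / 2 + n) * (n + 1) * f (n + 1) = (a + n) * (b + n) * f n)
    (j m : ℕ) :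
    (a + b + 1 / 2 + (j + m : ℕ)) * (2 * a + 2 * b + (j + m : ℕ)) * ((j + m : ℕ) + 1)
        * (f j * f (m + 1))
      - (2 * a + (j + m : ℕ)) * (2 * b + (j + m : ℕ)) * (a + b + (j + m : ℕ)) * (f j * f m)
      = clausenCert (a + b) (j + m) j * (f j * f (m + 1))
        - clausenCert (a + b) (j + m) (j + 1) * (f (j + 1) * f m) := by
  simp only [clausenCert]
  push_cast
  -- `clausenCert (a+b) (j+m) (j+1) = (a+b+1/2+j)(j+1)(j+3m+2(a+b))` and the coefficient of
  -- `f j * f (m+1)` is `(a+b+1/2+m)(m+1)(3j+m+2(a+b))`, so both reduce through the recurrence.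
  linear_combination (3 * (j : K) + m + 2 * (a + b)) * f j * hf m
    + ((j : K) + 3 * m + 2 * (a + b)) * f m * hf j

theorem clausen_cauchy_recurrence
    (hf : ∀ n : ℕ, (a + b + 1 / 2 + n) * (n + 1) * f (n + 1) = (a + n) * (b + n) * f n)
    (k : ℕ) :
    (a + b + 1 / 2 + k) * (2 * a + 2 * b + k) * (k + 1)
        * ∑ j ∈ range (k + 1 + 1), f j * f (k + 1 - j)
      = (2 * a + k) * (2 * b + k) * (a + b + k) * ∑ j ∈ range (k + 1), f j * f (k - j) := by
  set G : ℕ → K := fun j => clausenCert (a + b) k j * (f j * f (k + 1 - j))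
  have hterm : ∀ j ∈ range (k + 1),
      (a + b + 1 / 2 + k) * (2 * a + 2 * b + k) * (k + 1) * (f j * f (k + 1 - j))
        - (2 * a + k) * (2 * b + k) * (a + b + k) * (f j * f (k - j)) = G j - G (j + 1) := by
    intro j hj
    obtain ⟨m, rfl⟩ := Nat.exists_eq_add_of_le (mem_range_succ_iff.1 hj)
    simp only [G, show j + m + 1 - j = m + 1 by omega, show j + m - j = m by omega,
      show j + m + 1 - (j + 1) = m by omega]
    exact clausen_wz_step hf j m
  have htele := sum_range_sub' G (k + 1)
  rw [← sum_congr rfl hterm, sum_sub_distrib, ← mul_sum, ← mul_sum] at htele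
  have hG : G 0 - G (k + 1) = -((a + b + 1 / 2 + k) * (2 * a + 2 * b + k) * (k + 1)
      * (f (k + 1) * f (k + 1 - (k + 1)))) := by
    simp only [G, clausenCert]
    push_cast
    ring
  rw [sum_range_succ]
  linear_combination htele + hG

end Clausen

noncomputable def hyp21Coeff (a b c : ℂ) (n : ℕ) : ℂ :=
  poch a n * poch b n / (poch c n * n.factorial)

noncomputable def hyp32Coeff (a₁ a₂ a₃ b₁ b₂ : ℂ) (n : ℕ) : ℂ :=
  poch a₁ n * poch a₂ n * poch a₃ n / (poch b₁ n * poch b₂ n * n.factorial)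

theorem hyp21Coeff_succ {a b c : ℂ} (hc : ∀ m : ℕ, c + m ≠ 0) (n : ℕ) :
    (c + n) * (n + 1) * hyp21Coeff a b c (n + 1) = (a + n) * (b + n) * hyp21Coeff a b c n := by
  have hpoch := poch_ne_zero hc n
  have hcn := hc n
  simp only [hyp21Coeff, poch_succ, Nat.factorial_succ]
  push_cast
  field_simp

theorem hyp32Coeff_succ {a₁ a₂ a₃ b₁ b₂ : ℂ} (hb₁ : ∀ m : ℕ, b₁ + m ≠ 0)
    (hb₂ : ∀ m : ℕ, b₂ + m ≠ 0) (n : ℕ) :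
    (b₁ + n) * (b₂ + n) * (n + 1) * hyp32Coeff a₁ a₂ a₃ b₁ b₂ (n + 1)
      = (a₁ + n) * (a₂ + n) * (a₃ + n) * hyp32Coeff a₁ a₂ a₃ b₁ b₂ n := by
  have hpoch₁ := poch_ne_zero hb₁ n
  have hpoch₂ := poch_ne_zero hb₂ n
  have hb₁n := hb₁ n
  have hb₂n := hb₂ n
  simp only [hyp32Coeff, poch_succ, Nat.factorial_succ]
  push_cast
  field_simp

/-- Clausen's formula at the level of power-series coefficients. -/
theorem stmt_3 (a b : ℂ)
    (h1 : ∀ m : ℕ, a + b + 1 / 2 + (m : ℂ) ≠ 0)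
    (h2 : ∀ m : ℕ, 2 * a + 2 * b + (m : ℂ) ≠ 0) (k : ℕ) :
    ∑ j ∈ Finset.range (k + 1),
      (poch a j * poch b j / (poch (a + b + 1 / 2) j * (j.factorial : ℂ))) *
        (poch a (k - j) * poch b (k - j) /
          (poch (a + b + 1 / 2) (k - j) * ((k - j).factorial : ℂ)))
      = poch (2 * a) k * poch (2 * b) k * poch (a + b) k /
          (poch (a + b + 1 / 2) k * poch (2 * a + 2 * b) k * (k.factorial : ℂ)) := by
  have hsq := seq_eq_of_recurrence
    (D := fun n : ℕ => (a + b + 1 / 2 + n) * (2 * a + 2 * b + n) * (n + 1))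
    (N := fun n : ℕ => (2 * a + n) * (2 * b + n) * (a + b + n))
    (u := fun n => ∑ j ∈ range (n + 1),
      hyp21Coeff a b (a + b + 1 / 2) j * hyp21Coeff a b (a + b + 1 / 2) (n - j))
    (v := hyp32Coeff (2 * a) (2 * b) (a + b) (a + b + 1 / 2) (2 * a + 2 * b))
    (fun n => mul_ne_zero (mul_ne_zero (h1 n) (h2 n)) (Nat.cast_add_one_ne_zero n))
    (clausen_cauchy_recurrence (hyp21Coeff_succ h1)) (hyp32Coeff_succ h1 h2)
    (by simp [hyp21Coeff, hyp32Coeff, poch_zero])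
  exact congrFun hsq k
end

section
/- Let a, x be complex numbers with a + m ≠ 0 for every natural number m. Define, for each natural number k, S(k) = ∑_{j=0}^{k} (a+3)_j (−k)_j x^j / ((a)_j · j!), where (−k)_j denotes the Pochhammer symbol of the complex number −k. Then for every natural number k, (−2a − 6x²ka² + 6x³ka + 3x³ka² + 2x³k + 2x³a − 3x²a³ + x³k³ + 3x³k² − 15x²ka − 3x²k²a + 3x³k²a − 6x²k² + 3x³a² + x³a³ + 9xka + 6xa + 6xk − 3a² − a³ + 3xka² + 3xa³ + 9xa² − 6x²a − 6x²k − 9x²a²) · S(k+1) + (x−1) · (−2a + 6x + 6x³ − 6x²ka² + 12x³ka + 3x³ka² + 11x³k + 11x³a − 3x²a³ + x³k³ + 6x³k² − 21x²ka − 3x²k²a + 3x³k²a − 6x²k² + 6x³a² + x³a³ + 9xka + 15xa + 6xk − 3a² − a³ + 3xka² − 12x² + 3xa³ + 12xa² − 24x²a − 18x²k − 15x²a²) · S(k) = 0. (This is the first-order recurrence in k, with cubic polynomial coefficients in k having no proper factorization over ℚ, satisfied by the polynomials ₂F₁(a+3, −k; a; x).) -/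
open Finset

theorem sum_range_succ_choose_mul_pow_mul {R : Type*} [CommSemiring R] (y : R) (f : ℕ → R)
    (k : ℕ) :
    ∑ j ∈ range (k + 2), ((k + 1).choose j : R) * y ^ j * f j =
      ∑ j ∈ range (k + 1), (k.choose j : R) * y ^ j * f j +
        y * ∑ j ∈ range (k + 1), (k.choose j : R) * y ^ j * f (j + 1) := by
  have hshift : ∑ j ∈ range (k + 1), (k.choose j : R) * y ^ j * f j =
      ∑ j ∈ range (k + 1), (k.choose (j + 1) : R) * y ^ (j + 1) * f (j + 1) + f 0 := by
    calc ∑ j ∈ range (k + 1), (k.choose j : R) * y ^ j * f j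
        = ∑ j ∈ range (k + 2), (k.choose j : R) * y ^ j * f j := by
          rw [sum_range_succ _ (k + 1)]; simp
      _ = _ := by rw [sum_range_succ']; simp
  have hfactor : ∀ j, (k.choose j : R) * y ^ (j + 1) * f (j + 1) =
      y * ((k.choose j : R) * y ^ j * f (j + 1)) := fun j => by ring
  rw [sum_range_succ', hshift, mul_sum]
  simp only [Nat.choose_succ_succ, Nat.cast_add, add_mul, sum_add_distrib, hfactor,
    Nat.choose_zero_right, pow_zero, Nat.cast_one, one_mul]
  ring

section BinomCubicSum

variable {R : Type*} [CommRing R]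

def binomCubicSum (a y : R) (k : ℕ) : R :=
  ∑ j ∈ range (k + 1), (k.choose j : R) * y ^ j * ((a + j) * (a + j + 1) * (a + j + 2))

/-- Newton's expansion `(a+j)_3 = ∑_r C(3,r) (a+r)_{3-r} j(j-1)⋯(j-r+1)` together with
`∑_j C(k,j) j(j-1)⋯(j-r+1) y^j = k(k-1)⋯(k-r+1) y^r (1+y)^(k-r)`. -/
def binomCubicSumCoeff (a y : R) (k : ℕ) : R :=
  a * (a + 1) * (a + 2) * (1 + y) ^ 3 + 3 * (a + 1) * (a + 2) * k * y * (1 + y) ^ 2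
    + 3 * (a + 2) * k * (k - 1) * y ^ 2 * (1 + y) + k * (k - 1) * (k - 2) * y ^ 3

theorem binomCubicSum_succ (a y : R) (k : ℕ) :
    binomCubicSum a y (k + 1) = binomCubicSum a y k + y * binomCubicSum (a + 1) y k := by
  rw [binomCubicSum, sum_range_succ_choose_mul_pow_mul]
  congr 2
  refine sum_congr rfl fun j _ => ?_
  push_cast
  ring

theorem one_add_pow_three_mul_binomCubicSum (a y : R) (k : ℕ) :
    (1 + y) ^ 3 * binomCubicSum a y k = (1 + y) ^ k * binomCubicSumCoeff a y k := by
  induction k generalizing a with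
  | zero =>
    simp only [binomCubicSum, binomCubicSumCoeff, zero_add, sum_range_one, Nat.choose_self,
      Nat.cast_zero, Nat.cast_one, pow_zero]
    ring
  | succ k ih =>
    rw [binomCubicSum_succ, mul_add, ih, mul_left_comm, ih, binomCubicSumCoeff,
      binomCubicSumCoeff, binomCubicSumCoeff]
    push_cast
    ring

end BinomCubicSum

theorem binomCubicSumCoeff_mul_binomCubicSum_succ (a y : ℂ) (k : ℕ) :
    binomCubicSumCoeff a y k * binomCubicSum a y (k + 1) =
      (1 + y) * binomCubicSumCoeff a y (k + 1) * binomCubicSum a y k := by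
  have hgeneric : ∀ y ∈ ({-1}ᶜ : Set ℂ), binomCubicSumCoeff a y k * binomCubicSum a y (k + 1) =
      (1 + y) * binomCubicSumCoeff a y (k + 1) * binomCubicSum a y k := by
    intro y (hy : y ≠ -1)
    have hcube : (1 + y) ^ 3 ≠ 0 := pow_ne_zero 3 fun h => hy (by linear_combination h)
    refine mul_left_cancel₀ hcube ?_
    linear_combination binomCubicSumCoeff a y k * one_add_pow_three_mul_binomCubicSum a y (k + 1)
      - (1 + y) * binomCubicSumCoeff a y (k + 1) * one_add_pow_three_mul_binomCubicSum a y k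
  refine congrFun (Continuous.ext_on (dense_compl_singleton (-1)) ?_ ?_ hgeneric) y <;>
    simp only [binomCubicSumCoeff, binomCubicSum] <;> fun_prop

theorem poch_mul_poch_add (z : ℂ) (m n : ℕ) : poch z m * poch (z + m) n = poch z (m + n) := by
  rw [poch, poch, poch, ← ascPochhammer_mul]
  simp [Polynomial.eval_comp]

theorem poch_three (z : ℂ) : poch z 3 = z * (z + 1) * (z + 2) := by
  simp [poch, ascPochhammer_succ_right]

theorem poch_neg_natCast (k j : ℕ) : poch (-(k : ℂ)) j = (-1) ^ j * j.factorial * k.choose j := by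
  rw [poch, ascPochhammer_eval_neg_eq_descPochhammer, descPochhammer_eval_eq_descFactorial,
    Nat.descFactorial_eq_factorial_mul_choose]
  push_cast
  ring

theorem poch_ne_zero_s16 {a : ℂ} (ha : ∀ m : ℕ, a + (m : ℂ) ≠ 0) (j : ℕ) : poch a j ≠ 0 := by
  rw [poch, ne_eq, ascPochhammer_eval_eq_zero_iff]
  rintro ⟨m, -, hm⟩
  exact ha m (by rw [hm]; ring)

theorem sum_poch_eq_binomCubicSum {a : ℂ} (ha : ∀ m : ℕ, a + (m : ℂ) ≠ 0) (x : ℂ) (k : ℕ) :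
    ∑ j ∈ range (k + 1), poch (a + 3) j * poch (-(k : ℂ)) j * x ^ j / (poch a j * j.factorial) =
      (poch a 3)⁻¹ * binomCubicSum a (-x) k := by
  rw [binomCubicSum, mul_sum]
  refine sum_congr rfl fun j _ => ?_
  have hshift : poch a 3 * poch (a + 3) j = poch a j * poch (a + j) 3 := by
    have h3 := poch_mul_poch_add a 3 j
    rw [Nat.cast_ofNat] at h3
    rw [h3, poch_mul_poch_add, add_comm]
  have hj : (j.factorial : ℂ) ≠ 0 := Nat.cast_ne_zero.mpr j.factorial_ne_zero
  rw [poch_neg_natCast, ← poch_three]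
  field_simp [poch_ne_zero_s16 ha]
  linear_combination (k.choose j : ℂ) * x ^ j * (-1) ^ j * hshift

theorem stmt_16 (a x : ℂ) (ha : ∀ m : ℕ, a + (m : ℂ) ≠ 0)
    (S : ℕ → ℂ)
    (hS : ∀ k : ℕ, S k = ∑ j ∈ Finset.range (k + 1),
      poch (a + 3) j * poch (-(k : ℂ)) j * x ^ j / (poch a j * (j.factorial : ℂ))) :
    ∀ k : ℕ,
      (-2 * a - 6 * x ^ 2 * (k : ℂ) * a ^ 2 + 6 * x ^ 3 * (k : ℂ) * a
          + 3 * x ^ 3 * (k : ℂ) * a ^ 2 + 2 * x ^ 3 * (k : ℂ) + 2 * x ^ 3 * a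
          - 3 * x ^ 2 * a ^ 3 + x ^ 3 * (k : ℂ) ^ 3 + 3 * x ^ 3 * (k : ℂ) ^ 2
          - 15 * x ^ 2 * (k : ℂ) * a - 3 * x ^ 2 * (k : ℂ) ^ 2 * a
          + 3 * x ^ 3 * (k : ℂ) ^ 2 * a - 6 * x ^ 2 * (k : ℂ) ^ 2 + 3 * x ^ 3 * a ^ 2
          + x ^ 3 * a ^ 3 + 9 * x * (k : ℂ) * a + 6 * x * a + 6 * x * (k : ℂ)
          - 3 * a ^ 2 - a ^ 3 + 3 * x * (k : ℂ) * a ^ 2 + 3 * x * a ^ 3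
          + 9 * x * a ^ 2 - 6 * x ^ 2 * a - 6 * x ^ 2 * (k : ℂ) - 9 * x ^ 2 * a ^ 2)
          * S (k + 1)
      + (x - 1) *
          (-2 * a + 6 * x + 6 * x ^ 3 - 6 * x ^ 2 * (k : ℂ) * a ^ 2
            + 12 * x ^ 3 * (k : ℂ) * a + 3 * x ^ 3 * (k : ℂ) * a ^ 2
            + 11 * x ^ 3 * (k : ℂ) + 11 * x ^ 3 * a - 3 * x ^ 2 * a ^ 3
            + x ^ 3 * (k : ℂ) ^ 3 + 6 * x ^ 3 * (k : ℂ) ^ 2 - 21 * x ^ 2 * (k : ℂ) * a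
            - 3 * x ^ 2 * (k : ℂ) ^ 2 * a + 3 * x ^ 3 * (k : ℂ) ^ 2 * a
            - 6 * x ^ 2 * (k : ℂ) ^ 2 + 6 * x ^ 3 * a ^ 2 + x ^ 3 * a ^ 3
            + 9 * x * (k : ℂ) * a + 15 * x * a + 6 * x * (k : ℂ) - 3 * a ^ 2 - a ^ 3
            + 3 * x * (k : ℂ) * a ^ 2 - 12 * x ^ 2 + 3 * x * a ^ 3 + 12 * x * a ^ 2
            - 24 * x ^ 2 * a - 18 * x ^ 2 * (k : ℂ) - 15 * x ^ 2 * a ^ 2) * S k = 0 := by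
  intro k
  have hS' : ∀ n, S n = (poch a 3)⁻¹ * binomCubicSum a (-x) n := fun n => by
    rw [hS, sum_poch_eq_binomCubicSum ha]
  have hrec := binomCubicSumCoeff_mul_binomCubicSum_succ a (-x) k
  -- the two coefficients of the statement are `-binomCubicSumCoeff a (-x)` at `k` and `k + 1`
  simp only [binomCubicSumCoeff] at hrec
  push_cast at hrec
  rw [hS', hS']
  linear_combination -(poch a 3)⁻¹ * hrec
end
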